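/- Let G be a tree (a finite, connected, acyclic simple graph) on vertex set V containing distinct vertices R and j, let v be a vertex lying on the unique path P from R to j with v ∉ {R, j}, let u be a neighbor of v that does not lie on P, and let T be the vertex set of the connected component of u in G − v. Let C_R be the vertex set of the connected component of R in G − v. Then the reduced density operator Tr_T ( |G⟩⟨G| ) on ⨂_{w∈V∖T} ℂ² is separable with respect to the bipartition ( C_R , (V∖T)∖C_R ); moreover j and v belong to (V∖T)∖C_R. -/

import Mathlib

open scoped BigOperators

noncomputable section

/-- The state space of a collection of qubits indexed by `V`:
amplitudes on computational-basis configurations `V → Bool`. -/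
abbrev QState (V : Type*) := (V → Bool) → ℂ

variable {V : Type*}

/-- The inner product `⟨ψ|φ⟩`. -/
def qInner [Fintype V] [DecidableEq V] (ψ φ : QState V) : ℂ :=
  ∑ x, starRingEnd ℂ (ψ x) * φ x

/-- Pauli `X` acting on qubit `a`. -/
def pauliX [DecidableEq V] (a : V) (ψ : QState V) : QState V :=
  fun x => ψ (Function.update x a (!x a))

/-- Pauli `Z` acting on qubit `a`. -/
def pauliZ (a : V) (ψ : QState V) : QState V :=
  fun x => (if x a then (-1 : ℂ) else 1) * ψ x

/-- Pauli `Y` acting on qubit `a`. -/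
def pauliY [DecidableEq V] (a : V) (ψ : QState V) : QState V :=
  fun x => (if x a then Complex.I else -Complex.I) * ψ (Function.update x a (!x a))

/-- The tensor product `⨂_{b ∈ s} Z^{(b)}` of Pauli `Z` over the qubits in `s`. -/
def pauliZProd (s : Finset V) (ψ : QState V) : QState V :=
  fun x => (∏ b ∈ s, if x b then (-1 : ℂ) else 1) * ψ x

/-- A tensor product over the qubits in `s` of the diagonal single-qubit gate
`diag (f false, f true)`. -/
def diagProd (s : Finset V) (f : Bool → ℂ) (ψ : QState V) : QState V :=
  fun x => (∏ b ∈ s, f (x b)) * ψ x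

/-- The sign `(-1)^{x u · x v}` contributed by an edge `{u, v}`. -/
def edgeSign (x : V → Bool) : Sym2 V → ℂ :=
  Sym2.lift ⟨fun a b => if x a && x b then (-1 : ℂ) else 1,
    fun a b => by simp [Bool.and_comm]⟩

/-- The graph state `|G⟩ = (∏_{{u,v}∈E} CZ^{(uv)}) ⨂_v |+⟩^{(v)}` of a finite simple graph,
written out in amplitudes. -/
def graphState [Fintype V] [DecidableEq V] (G : SimpleGraph V) [DecidableRel G.Adj] :
    QState V :=
  fun x => ((Real.sqrt 2 : ℝ) : ℂ)⁻¹ ^ (Fintype.card V) * ∏ e ∈ G.edgeFinset, edgeSign x e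

/-- Local complementation `τ_a(G)` of a graph `G` at the vertex `a`: complement the
adjacency among the neighbors of `a`, leaving all other adjacencies unchanged. -/
def localComp (G : SimpleGraph V) (a : V) : SimpleGraph V where
  Adj u v :=
    (G.Adj a u ∧ G.Adj a v ∧ u ≠ v ∧ ¬ G.Adj u v) ∨
      ((¬ (G.Adj a u ∧ G.Adj a v)) ∧ G.Adj u v)
  symm := by
    constructor
    intro u v h
    rcases h with ⟨h1, h2, h3, h4⟩ | ⟨h1, h2⟩
    · exact Or.inl ⟨h2, h1, h3.symm, fun h => h4 (G.adj_symm h)⟩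
    · exact Or.inr ⟨fun h => h1 ⟨h.2, h.1⟩, G.adj_symm h2⟩
  loopless := by
    constructor
    intro u h
    rcases h with ⟨_, _, h3, _⟩ | ⟨_, h2⟩
    · exact h3 rfl
    · exact G.irrefl h2

instance [DecidableEq V] (G : SimpleGraph V) [DecidableRel G.Adj] (a : V) :
    DecidableRel (localComp G a).Adj := fun u v =>
  inferInstanceAs (Decidable
    ((G.Adj a u ∧ G.Adj a v ∧ u ≠ v ∧ ¬ G.Adj u v) ∨
      ((¬ (G.Adj a u ∧ G.Adj a v)) ∧ G.Adj u v)))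

/-- The induced subgraph of `G` on the vertices satisfying `P`. -/
def inducedSub (G : SimpleGraph V) (P : V → Prop) : SimpleGraph {v : V // P v} :=
  SimpleGraph.comap Subtype.val G

instance (G : SimpleGraph V) [DecidableRel G.Adj] (P : V → Prop) :
    DecidableRel (inducedSub G P).Adj := fun u v =>
  inferInstanceAs (Decidable (G.Adj u.1 v.1))

/-- The eigenvectors `|Z,+⟩ = |0⟩`, `|Z,-⟩ = |1⟩` of Pauli `Z`
(`s = false` the `+1`-eigenvector, `s = true` the `-1`-eigenvector). -/
def zVec (s : Bool) : Bool → ℂ := fun c => if c = s then 1 else 0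

/-- The eigenvectors `|X,±⟩ = (|0⟩ ± |1⟩)/√2` of Pauli `X`
(`s = false` the `+1`-eigenvector, `s = true` the `-1`-eigenvector). -/
def xVec (s : Bool) : Bool → ℂ :=
  fun c => ((Real.sqrt 2 : ℝ) : ℂ)⁻¹ * (if c && s then -1 else 1)

/-- The eigenvectors `|Y,±⟩ = (|0⟩ ± i|1⟩)/√2` of Pauli `Y`
(`s = false` the `+1`-eigenvector, `s = true` the `-1`-eigenvector). -/
def yVec (s : Bool) : Bool → ℂ :=
  fun c => ((Real.sqrt 2 : ℝ) : ℂ)⁻¹ *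
    (if c then (if s then -Complex.I else Complex.I) else 1)

/-- The rank-one projector `|v⟩⟨v|` on qubit `a` (identity elsewhere),
for a single-qubit vector `v`. -/
def projDir [DecidableEq V] (a : V) (v : Bool → ℂ) (ψ : QState V) : QState V :=
  fun x => v (x a) *
    (starRingEnd ℂ (v false) * ψ (Function.update x a false) +
      starRingEnd ℂ (v true) * ψ (Function.update x a true))

/-- The tensor product `|v⟩^{(a)} ⊗ |φ⟩` of a single-qubit state on qubit `a` with a state
on the remaining qubits. -/
def tensorQubit [DecidableEq V] (a : V) (v : Bool → ℂ) (φ : QState {u : V // u ≠ a}) :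
    QState V :=
  fun x => v (x a) * φ (fun u => x u.1)

/-- Apply a single-qubit gate with matrix entries `m r c = ⟨r|M|c⟩` on qubit `a`. -/
def applyGate [DecidableEq V] (a : V) (m : Bool → Bool → ℂ) (ψ : QState V) : QState V :=
  fun x => m (x a) false * ψ (Function.update x a false) +
    m (x a) true * ψ (Function.update x a true)

/-- The square roots `√(±iY) = (I ± iY)/√2`
(`s = false` for `√(+iY)`, `s = true` for `√(-iY)`). -/
def sqrtiY (s : Bool) : Bool → Bool → ℂ :=
  fun r c => ((Real.sqrt 2 : ℝ) : ℂ)⁻¹ *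
    (if s then (if r = false ∧ c = true then -1 else 1)
     else (if r = true ∧ c = false then -1 else 1))

/-- The Hadamard gate. -/
def hadamard : Bool → Bool → ℂ :=
  fun r c => ((Real.sqrt 2 : ℝ) : ℂ)⁻¹ * (if r && c then -1 else 1)

/-- Apply a tensor product of single-qubit gates, one on each qubit. -/
def applyLocal [Fintype V] [DecidableEq V] (u : V → Bool → Bool → ℂ) (ψ : QState V) :
    QState V :=
  fun x => ∑ y : V → Bool, (∏ v, u v (x v) (y v)) * ψ y

/-- `2×2` matrix multiplication (matrices as `Bool → Bool → ℂ`). -/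
def matMul2 (a b : Bool → Bool → ℂ) : Bool → Bool → ℂ :=
  fun r c => ∑ k : Bool, a r k * b k c

/-- Adjoint of a `2×2` matrix. -/
def matAdj2 (a : Bool → Bool → ℂ) : Bool → Bool → ℂ := fun r c => starRingEnd ℂ (a c r)

def idMat : Bool → Bool → ℂ := fun r c => if r = c then 1 else 0
def xMat : Bool → Bool → ℂ := fun r c => if r = c then 0 else 1
def yMat : Bool → Bool → ℂ := fun r c => if r = c then 0 else if r then Complex.I else -Complex.I
def zMat : Bool → Bool → ℂ := fun r c => if r = c then (if r then -1 else 1) else 0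

/-- A `2×2` matrix is unitary. -/
def IsUnitary2 (u : Bool → Bool → ℂ) : Prop := matMul2 (matAdj2 u) u = idMat

/-- A single-qubit Clifford unitary: a unitary conjugating `X` and `Z` into
`i^k·P` with `P` a Pauli matrix. -/
def IsClifford1 (u : Bool → Bool → ℂ) : Prop :=
  IsUnitary2 u ∧
    (∃ (k : ℕ) (P : Bool → Bool → ℂ), P ∈ ({idMat, xMat, yMat, zMat} : Set _) ∧
      matMul2 (matMul2 u xMat) (matAdj2 u) = Complex.I ^ k • P) ∧
    (∃ (k : ℕ) (P : Bool → Bool → ℂ), P ∈ ({idMat, xMat, yMat, zMat} : Set _) ∧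
      matMul2 (matMul2 u zMat) (matAdj2 u) = Complex.I ^ k • P)

/-- The action of the `n`-qubit Pauli operator `c · ⨂_v X^{xv v} Z^{zv v}`. -/
def pauliAction [Fintype V] (c : ℂ) (xv zv : V → Bool) (ψ : QState V) : QState V :=
  fun s => c * (∏ v, if zv v && (xor (s v) (xv v)) then (-1 : ℂ) else 1) *
    ψ (fun v => xor (s v) (xv v))

/-- The outer product `|ψ⟩⟨φ|` as a matrix on configurations. -/
def outer (ψ φ : QState V) : (V → Bool) → (V → Bool) → ℂ :=
  fun x y => ψ x * starRingEnd ℂ (φ y)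

open Classical in
/-- Partial trace keeping the qubits that satisfy `P` (tracing out the others). -/
def ptraceKeep [Fintype V] [DecidableEq V] (P : V → Prop)
    (ρ : (V → Bool) → (V → Bool) → ℂ) :
    ({v : V // P v} → Bool) → ({v : V // P v} → Bool) → ℂ :=
  fun x y => ∑ z : {v : V // ¬ P v} → Bool,
    ρ (fun w => if h : P w then x ⟨w, h⟩ else z ⟨w, h⟩)
      (fun w => if h : P w then y ⟨w, h⟩ else z ⟨w, h⟩)

open Classical in
/-- Apply a product of single-qubit bras `⟨bra v|` to each qubit `v` satisfying `P`,
leaving a state on the remaining qubits. -/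
def applyBras [Fintype V] [DecidableEq V] (P : V → Prop) (bra : V → Bool → ℂ)
    (ψ : QState V) : QState {v : V // ¬ P v} :=
  fun x => ∑ z : {v : V // P v} → Bool,
    (∏ v : {v : V // P v}, bra v.1 (z v)) *
      ψ (fun w => if h : P w then z ⟨w, h⟩ else x ⟨w, h⟩)

/-- A density operator: hermitian, trace one, positive semidefinite. -/
def IsDensityOp {α : Type*} [Fintype α] [DecidableEq α]
    (ρ : (α → Bool) → (α → Bool) → ℂ) : Prop :=
  (∀ x y, starRingEnd ℂ (ρ y x) = ρ x y) ∧ (∑ x, ρ x x = 1) ∧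
    ∀ ψ : (α → Bool) → ℂ, ∃ r : ℝ, 0 ≤ r ∧
      (∑ x, ∑ y, starRingEnd ℂ (ψ x) * ρ x y * ψ y) = (r : ℂ)

open Classical in
/-- Separability of an operator on the qubits indexed by `α` with respect to the
bipartition `(A, Aᶜ)`: a finite convex combination of tensor products of density
operators. -/
def SeparableWrt {α : Type*} [Fintype α] [DecidableEq α] (A : Set α)
    (ρ : (α → Bool) → (α → Bool) → ℂ) : Prop :=
  ∃ (k : ℕ) (p : Fin k → ℝ)
    (σ : Fin k → ({a : α // a ∈ A} → Bool) → ({a : α // a ∈ A} → Bool) → ℂ)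
    (τ : Fin k → ({a : α // a ∉ A} → Bool) → ({a : α // a ∉ A} → Bool) → ℂ),
    (∀ i, 0 ≤ p i) ∧ (∑ i, p i = 1) ∧
    (∀ i, IsDensityOp (σ i)) ∧ (∀ i, IsDensityOp (τ i)) ∧
    ∀ x y, ρ x y = ∑ i, (p i : ℂ) *
      (σ i (fun a => x a.1) (fun a => y a.1) * τ i (fun a => x a.1) (fun a => y a.1))


instance {α : Type*} [DecidableEq α] (r : α → α → Prop) [DecidableRel r] :
    DecidableRel (SimpleGraph.fromRel r).Adj := fun a b =>
  inferInstanceAs (Decidable (a ≠ b ∧ (r a b ∨ r b a)))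

/-- The line graph on `{1, …, n}` (as `Fin n`) with edges between consecutive vertices. -/
def lineGraph (n : ℕ) : SimpleGraph (Fin n) :=
  SimpleGraph.fromRel (fun i j => (i : ℕ) + 1 = (j : ℕ))

instance (n : ℕ) : DecidableRel (lineGraph n).Adj := fun a b =>
  inferInstanceAs (Decidable (a ≠ b ∧ ((a : ℕ) + 1 = (b : ℕ) ∨ (b : ℕ) + 1 = (a : ℕ))))

/-- The extension `I_R ⊗ s` of an operator `s` on `n` qubits by the identity on an extra
reference qubit labelled `0`. -/
def liftOp {n : ℕ} (s : QState (Fin n) → QState (Fin n)) (ψ : QState (Fin (n + 1))) :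
    QState (Fin (n + 1)) :=
  fun x => s (fun y => ψ (Fin.cons (x 0) y)) (fun k => x k.succ)

end

/-!
In a tree, the component `T` of `u` in `G − v` is attached to the rest by the single edge `vu`,
so `|G⟩(x) = (-1)^{x_v x_u} |G[Tᶜ]⟩(x_{Tᶜ}) |G[T]⟩(x_T)`. Summing over the qubits of `T`, the
phase `(-1)^{(x_v + y_v) x_u}` averages to `[x_v = y_v]`: tracing out `T` dephases
`|G[Tᶜ]⟩⟨G[Tᶜ]|` in the `Z` basis at `v`. In `G[Tᶜ]` every edge leaving `C_R` ends at `v`, so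
once `x_v = b` is fixed the amplitude factors into `Z^b` on the neighbours of `v` applied to
`|G[C_R]⟩`, times `|G[Tᶜ ∖ C_R]⟩` restricted to `x_v = b`. The dephased state is therefore the
equal mixture over `b` of two product states. Finally `j` and `v` lie outside `C_R` because the
unique path from `R` to `j` passes through `v`.
-/

-- Classical decidability makes the subtype `Fintype` instances agree with those inside
-- `ptraceKeep` and `SeparableWrt`.
open Classical

section EdgeSign

variable {V W : Type*}

lemma edgeSign_mk (x : V → Bool) (a b : V) :
    edgeSign x s(a, b) = if x a && x b then -1 else 1 := rfl

lemma edgeSign_eq_one_or_neg_one (x : V → Bool) (e : Sym2 V) :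
    edgeSign x e = 1 ∨ edgeSign x e = -1 := by
  induction e using Sym2.ind with
  | _ a b => rw [edgeSign_mk]; split <;> simp

lemma conj_edgeSign (x : V → Bool) (e : Sym2 V) :
    starRingEnd ℂ (edgeSign x e) = edgeSign x e := by
  rcases edgeSign_eq_one_or_neg_one x e with h | h <;> simp [h]

lemma edgeSign_mul_self (x : V → Bool) (e : Sym2 V) : edgeSign x e * edgeSign x e = 1 := by
  rcases edgeSign_eq_one_or_neg_one x e with h | h <;> simp [h]

lemma edgeSign_comp (x : W → Bool) (f : V → W) (e : Sym2 V) :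
    edgeSign (x ∘ f) e = edgeSign x (e.map f) := by
  induction e using Sym2.ind with
  | _ a b => rfl

end EdgeSign

section Cut

variable {V : Type*} (G : SimpleGraph V) [DecidableRel G.Adj] (P : V → Prop)

lemma map_edgeFinset_inducedSub [Fintype V] [Fintype {w // P w}] :
    (inducedSub G P).edgeFinset.map (Function.Embedding.subtype P).sym2Map =
      G.edgeFinset.filter (fun e => ∀ w ∈ e, P w) := by
  ext e
  simp only [Finset.mem_map, Finset.mem_filter, SimpleGraph.mem_edgeFinset,
    Function.Embedding.sym2Map_apply, Function.Embedding.coe_subtype]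
  constructor
  · rintro ⟨e', he', rfl⟩
    induction e' using Sym2.ind with
    | _ a b => exact ⟨he', by simp [a.2, b.2]⟩
  · induction e using Sym2.ind with
    | _ a b =>
      rintro ⟨hab, hP⟩
      exact ⟨s(⟨a, hP a (by simp)⟩, ⟨b, hP b (by simp)⟩), hab, rfl⟩

lemma prod_edgeSign_inducedSub [Fintype V] [Fintype {w // P w}] (x : V → Bool) :
    ∏ e ∈ (inducedSub G P).edgeFinset, edgeSign (fun w : {w // P w} => x w) e =
      ∏ e ∈ G.edgeFinset.filter (fun e => ∀ w ∈ e, P w), edgeSign x e := by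
  rw [← map_edgeFinset_inducedSub, Finset.prod_map]
  exact Finset.prod_congr rfl fun e _ => edgeSign_comp x Subtype.val e

lemma filter_cut_edgeFinset_eq_map [Fintype V] [DecidableEq V] {c : V} (hc : ¬ P c)
    (hcut : ∀ a b, G.Adj a b → P a → ¬ P b → b = c) :
    G.edgeFinset.filter (fun e => ¬ (∀ w ∈ e, P w) ∧ ¬ (∀ w ∈ e, ¬ P w)) =
      (Finset.univ.filter fun w : {w // P w} => G.Adj c w).map
        ((Function.Embedding.subtype P).trans (Sym2.mkEmbedding c)) := by
  ext e
  induction e using Sym2.ind with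
  | _ a b =>
    simp only [Finset.mem_filter, SimpleGraph.mem_edgeFinset, SimpleGraph.mem_edgeSet,
      Finset.mem_map, Finset.mem_univ, true_and, Sym2.mem_iff,
      forall_eq_or_imp, forall_eq, Subtype.exists, exists_and_left]
    constructor
    · rintro ⟨hab, hPab, hnPab⟩
      by_cases ha : P a
      · have hb : ¬ P b := fun hb => hPab ⟨ha, hb⟩
        obtain rfl := hcut a b hab ha hb
        exact ⟨a, hab.symm, ha, Sym2.eq_swap⟩
      · have hb : P b := by_contra fun hb => hnPab ⟨ha, hb⟩
        obtain rfl := hcut b a hab.symm hb ha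
        exact ⟨b, hab, hb, rfl⟩
    · rintro ⟨w, hcw, hw, he⟩
      rcases Sym2.eq_iff.mp he with ⟨rfl, rfl⟩ | ⟨rfl, rfl⟩
      · exact ⟨hcw, fun h => hc h.1, fun h => h.2 hw⟩
      · exact ⟨hcw.symm, fun h => hc h.2, fun h => h.1 hw⟩

lemma graphState_eq_diagProd_mul_of_cut_vertex [Fintype V] [DecidableEq V] {c : V} (hc : ¬ P c)
    (hcut : ∀ a b, G.Adj a b → P a → ¬ P b → b = c) (x : V → Bool) :
    graphState G x =
      diagProd (Finset.univ.filter fun w : {w // P w} => G.Adj c w)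
          (fun s => if x c && s then -1 else 1) (graphState (inducedSub G P)) (fun w => x w) *
        graphState (inducedSub G (¬ P ·)) (fun w => x w) := by
  have hcard : Fintype.card V = Fintype.card {w // P w} + Fintype.card {w // ¬ P w} := by
    rw [← Fintype.card_sum, Fintype.card_congr (Equiv.sumCompl P)]
  have hsplit : ∏ e ∈ G.edgeFinset, edgeSign x e =
      (∏ e ∈ (inducedSub G P).edgeFinset, edgeSign (fun w : {w // P w} => x w) e) *
        (∏ e ∈ (inducedSub G (¬ P ·)).edgeFinset, edgeSign (fun w : {w // ¬ P w} => x w) e) *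
        ∏ w ∈ Finset.univ.filter fun w : {w // P w} => G.Adj c w, edgeSign x s(c, w) := by
    have hcutProd :
        ∏ w ∈ Finset.univ.filter fun w : {w // P w} => G.Adj c w, edgeSign x s(c, w) =
        ∏ e ∈ G.edgeFinset.filter (fun e => ¬ (∀ w ∈ e, P w) ∧ ¬ (∀ w ∈ e, ¬ P w)),
          edgeSign x e := by
      rw [filter_cut_edgeFinset_eq_map G P hc hcut, Finset.prod_map]
      rfl
    rw [prod_edgeSign_inducedSub, prod_edgeSign_inducedSub, hcutProd,
      ← Finset.prod_filter_mul_prod_filter_not G.edgeFinset (fun e => ∀ w ∈ e, P w),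
      ← Finset.prod_filter_mul_prod_filter_not
        (G.edgeFinset.filter (fun e => ¬ ∀ w ∈ e, P w)) (fun e => ∀ w ∈ e, ¬ P w),
      Finset.filter_filter, Finset.filter_filter, mul_assoc]
    congr 3
    ext e
    induction e using Sym2.ind with
    | _ a b =>
      simp only [Finset.mem_filter, Sym2.mem_iff, forall_eq_or_imp, forall_eq]
      tauto
  simp only [graphState, diagProd, hsplit, hcard, pow_add, edgeSign_mk]
  ring

end Cut

section States

variable {V : Type*} [Fintype V] [DecidableEq V]

lemma two_mul_sum_eval (a : V) (g : Bool → ℂ) :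
    2 * ∑ x : V → Bool, g (x a) = 2 ^ Fintype.card V * (g false + g true) := by
  have : Nonempty V := ⟨a⟩
  obtain ⟨n, hn⟩ := Nat.exists_eq_succ_of_ne_zero (Fintype.card_ne_zero (α := V))
  rw [← (Equiv.funSplitAt a Bool).symm.sum_comp, Fintype.sum_prod_type]
  simp only [Equiv.funSplitAt_symm_apply, dif_pos, Finset.sum_const, Finset.card_univ,
    Fintype.card_fun, Fintype.card_bool, Fintype.card_subtype_compl, Fintype.card_unique, hn,
    Fintype.sum_bool, nsmul_eq_mul, Nat.succ_sub_one, pow_succ]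
  push_cast
  ring

lemma ofReal_sqrt_two_mul_self : ((Real.sqrt 2 : ℝ) : ℂ) * ((Real.sqrt 2 : ℝ) : ℂ) = 2 := by
  rw [← Complex.ofReal_mul, Real.mul_self_sqrt zero_le_two, Complex.ofReal_ofNat]

lemma inv_sqrt_two_mul_self :
    ((Real.sqrt 2 : ℝ) : ℂ)⁻¹ * ((Real.sqrt 2 : ℝ) : ℂ)⁻¹ = 2⁻¹ := by
  rw [← mul_inv, ofReal_sqrt_two_mul_self]

variable (G : SimpleGraph V) [DecidableRel G.Adj]

lemma conj_graphState (x : V → Bool) :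
    starRingEnd ℂ (graphState G x) = graphState G x := by
  simp only [graphState, map_mul, map_pow, map_inv₀, Complex.conj_ofReal, map_prod, conj_edgeSign]

lemma graphState_mul_conj (x : V → Bool) :
    graphState G x * starRingEnd ℂ (graphState G x) = 2⁻¹ ^ Fintype.card V := by
  rw [conj_graphState, graphState, mul_mul_mul_comm, ← Finset.prod_mul_distrib, ← mul_pow,
    inv_sqrt_two_mul_self]
  simp only [edgeSign_mul_self, Finset.prod_const_one, mul_one]

lemma qInner_graphState_self : qInner (graphState G) (graphState G) = 1 := by
  simp only [qInner, mul_comm (starRingEnd ℂ _), graphState_mul_conj, Finset.sum_const,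
    Finset.card_univ, Fintype.card_fun, Fintype.card_bool, nsmul_eq_mul]
  push_cast
  rw [← mul_pow, mul_inv_cancel₀ two_ne_zero, one_pow]

lemma qInner_sqrt_two_mul_indicator_graphState_self (c : V) (b : Bool) :
    qInner (fun z => ((Real.sqrt 2 : ℝ) : ℂ) * ((if z c = b then 1 else 0) * graphState G z))
      (fun z => ((Real.sqrt 2 : ℝ) : ℂ) * ((if z c = b then 1 else 0) * graphState G z)) =
      1 := by
  have hterm : ∀ z : V → Bool,
      starRingEnd ℂ
          (((Real.sqrt 2 : ℝ) : ℂ) * ((if z c = b then 1 else 0) * graphState G z)) *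
          (((Real.sqrt 2 : ℝ) : ℂ) * ((if z c = b then 1 else 0) * graphState G z)) =
        2 * (if z c = b then 1 else 0) * 2⁻¹ ^ Fintype.card V := by
    intro z
    rw [← graphState_mul_conj G z]
    split_ifs
    · simp only [map_mul, map_one, Complex.conj_ofReal]
      linear_combination
        (graphState G z * starRingEnd ℂ (graphState G z)) * ofReal_sqrt_two_mul_self
    · simp
  have hsum :=
    two_mul_sum_eval c fun s => 2 * (if s = b then 1 else 0) * (2⁻¹ : ℂ) ^ Fintype.card V
  have hpow : (2⁻¹ : ℂ) ^ Fintype.card V * 2 ^ Fintype.card V = 1 := by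
    rw [← mul_pow, inv_mul_cancel₀ two_ne_zero, one_pow]
  have hb : ((if false = b then 1 else 0) + (if true = b then 1 else 0) : ℂ) = 1 := by
    cases b <;> simp
  simp only [qInner, hterm]
  linear_combination hsum / 2 + hpow + (2⁻¹ ^ Fintype.card V * 2 ^ Fintype.card V) * hb

end States

section Separability

variable {α : Type*} [Fintype α] [DecidableEq α]

lemma isDensityOp_outer {ψ : QState α} (hψ : qInner ψ ψ = 1) : IsDensityOp (outer ψ ψ) := by
  refine ⟨fun x y => by simp [outer, mul_comm], ?_, fun φ => ?_⟩
  · simpa [qInner, outer, mul_comm] using hψ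
  · refine ⟨Complex.normSq (qInner ψ φ), Complex.normSq_nonneg _, ?_⟩
    rw [Complex.normSq_eq_conj_mul_self, qInner, map_sum, Finset.sum_mul_sum]
    simp only [outer, map_mul, Complex.conj_conj]
    exact Finset.sum_congr rfl fun x _ => Finset.sum_congr rfl fun y _ => by ring

lemma qInner_diagProd_self (s : Finset α) {f : Bool → ℂ}
    (hf : ∀ b, starRingEnd ℂ (f b) * f b = 1)
    (ψ : QState α) : qInner (diagProd s f ψ) (diagProd s f ψ) = qInner ψ ψ := by
  refine Finset.sum_congr rfl fun x _ => ?_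
  simp only [diagProd, map_mul, map_prod]
  rw [mul_mul_mul_comm, ← Finset.prod_mul_distrib]
  simp [hf]

lemma separableWrt_of_convex_sum {ι : Type*} [Fintype ι] (A : Set α)
    (ρ : (α → Bool) → (α → Bool) → ℂ) (p : ι → ℝ)
    (σ : ι → ({a : α // a ∈ A} → Bool) → ({a : α // a ∈ A} → Bool) → ℂ)
    (τ : ι → ({a : α // a ∉ A} → Bool) → ({a : α // a ∉ A} → Bool) → ℂ)
    (hp : ∀ i, 0 ≤ p i) (hp1 : ∑ i, p i = 1)
    (hσ : ∀ i, IsDensityOp (σ i)) (hτ : ∀ i, IsDensityOp (τ i))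
    (hρ : ∀ x y, ρ x y = ∑ i, (p i : ℂ) *
      (σ i (fun a => x a.1) (fun a => y a.1) * τ i (fun a => x a.1) (fun a => y a.1))) :
    SeparableWrt A ρ := by
  let e := Fintype.equivFin ι
  refine ⟨Fintype.card ι, p ∘ e.symm, σ ∘ e.symm, τ ∘ e.symm, fun i => hp _,
    by rwa [Function.comp_def, e.symm.sum_comp], fun i => hσ _, fun i => hτ _, fun x y => ?_⟩
  rw [hρ, ← e.symm.sum_comp]
  rfl

end Separability

section PartialTrace

variable {V : Type*} [Fintype V] [DecidableEq V] (G : SimpleGraph V) [DecidableRel G.Adj]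
  (P : V → Prop)

lemma graphState_merge_of_cut_edge {v u : V} (hv : P v) (hu : ¬ P u) (hadj : G.Adj v u)
    (hcut : ∀ a b, G.Adj a b → P a → ¬ P b → a = v ∧ b = u)
    (x : {w // P w} → Bool) (z : {w // ¬ P w} → Bool) :
    graphState G (fun w => if h : P w then x ⟨w, h⟩ else z ⟨w, h⟩) =
      (if z ⟨u, hu⟩ && x ⟨v, hv⟩ then -1 else 1) *
        (graphState (inducedSub G P) x * graphState (inducedSub G (¬ P ·)) z) := by
  have hN : (Finset.univ.filter fun w : {w // P w} => G.Adj u w) = {⟨v, hv⟩} := by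
    ext w
    simp only [Finset.mem_filter, Finset.mem_univ, true_and, Finset.mem_singleton]
    exact ⟨fun h => Subtype.ext (hcut w u h.symm w.2 hu).1, fun h => h ▸ hadj.symm⟩
  rw [graphState_eq_diagProd_mul_of_cut_vertex G P hu fun a b hab ha hb => (hcut a b hab ha hb).2,
    hN]
  have hx : (fun w : {w // P w} => if h : P w then x ⟨w, h⟩ else z ⟨w, h⟩) = x :=
    funext fun w => dif_pos w.2
  have hz : (fun w : {w // ¬ P w} => if h : P w then x ⟨w, h⟩ else z ⟨w, h⟩) = z :=
    funext fun w => dif_neg w.2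
  simp only [diagProd, Finset.prod_singleton, dif_pos hv, dif_neg hu, hx, hz]
  ring

lemma ptraceKeep_graphState_of_cut_edge {v u : V} (hv : P v) (hu : ¬ P u) (hadj : G.Adj v u)
    (hcut : ∀ a b, G.Adj a b → P a → ¬ P b → a = v ∧ b = u) (x y : {w // P w} → Bool) :
    ptraceKeep P (outer (graphState G) (graphState G)) x y =
      if x ⟨v, hv⟩ = y ⟨v, hv⟩ then
        outer (graphState (inducedSub G P)) (graphState (inducedSub G P)) x y
      else 0 := by
  set g : Bool → ℂ := fun b =>
    (if b && x ⟨v, hv⟩ then -1 else 1) * (if b && y ⟨v, hv⟩ then -1 else 1) with hg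
  have hterm : ∀ z : {w // ¬ P w} → Bool,
      outer (graphState G) (graphState G)
          (fun w => if h : P w then x ⟨w, h⟩ else z ⟨w, h⟩)
          (fun w => if h : P w then y ⟨w, h⟩ else z ⟨w, h⟩) =
        outer (graphState (inducedSub G P)) (graphState (inducedSub G P)) x y *
          2⁻¹ ^ Fintype.card {w // ¬ P w} * g (z ⟨u, hu⟩) := by
    intro z
    simp only [outer, graphState_merge_of_cut_edge G P hv hu hadj hcut, map_mul, hg,
      ← graphState_mul_conj (inducedSub G (¬ P ·)) z]
    split_ifs <;> simp only [map_neg, map_one] <;> ring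
  have hsum := two_mul_sum_eval (⟨u, hu⟩ : {w // ¬ P w}) g
  have hpow : (2⁻¹ : ℂ) ^ Fintype.card {w // ¬ P w} * 2 ^ Fintype.card {w // ¬ P w} = 1 := by
    rw [← mul_pow, inv_mul_cancel₀ two_ne_zero, one_pow]
  have hg2 : g false + g true = if x ⟨v, hv⟩ = y ⟨v, hv⟩ then 2 else 0 := by
    cases hx : x ⟨v, hv⟩ <;> cases hy : y ⟨v, hv⟩ <;> norm_num [hg, hx, hy]
  rw [hg2] at hsum
  simp only [ptraceKeep, hterm, ← Finset.mul_sum]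
  split_ifs at hsum ⊢
  · linear_combination (outer (graphState (inducedSub G P)) (graphState (inducedSub G P)) x y *
      2⁻¹ ^ Fintype.card {w // ¬ P w} / 2) * hsum +
      outer (graphState (inducedSub G P)) (graphState (inducedSub G P)) x y * hpow
  · linear_combination (outer (graphState (inducedSub G P)) (graphState (inducedSub G P)) x y *
      2⁻¹ ^ Fintype.card {w // ¬ P w} / 2) * hsum

end PartialTrace

section CutVertex

variable {W : Type*} [Fintype W] [DecidableEq W] (H : SimpleGraph W) [DecidableRel H.Adj]
  (A : Set W) {c : W}

lemma separableWrt_dephased_graphState_of_cut_vertex (hc : c ∉ A)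
    (hcut : ∀ a b, H.Adj a b → a ∈ A → b ∉ A → b = c) :
    SeparableWrt A fun x y =>
      if x c = y c then outer (graphState H) (graphState H) x y else 0 := by
  set φ : Bool → QState {w // w ∈ A} := fun b =>
    diagProd (Finset.univ.filter fun w : {w // w ∈ A} => H.Adj c w)
      (fun s => if b && s then -1 else 1) (graphState (inducedSub H (· ∈ A))) with hφ
  set χ : Bool → QState {w // w ∉ A} := fun b z =>
    ((Real.sqrt 2 : ℝ) : ℂ) * ((if z ⟨c, hc⟩ = b then 1 else 0) *
      graphState (inducedSub H (· ∉ A)) z) with hχ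
  have hφnorm : ∀ b, qInner (φ b) (φ b) = 1 := by
    intro b
    rw [hφ, qInner_diagProd_self _ (fun s => by cases b <;> cases s <;> simp),
      qInner_graphState_self]
  have hχnorm : ∀ b, qInner (χ b) (χ b) = 1 :=
    qInner_sqrt_two_mul_indicator_graphState_self (inducedSub H (· ∉ A)) ⟨c, hc⟩
  refine separableWrt_of_convex_sum A _ (fun _ : Bool => 1 / 2) (fun b => outer (φ b) (φ b))
    (fun b => outer (χ b) (χ b)) (fun _ => by norm_num) (by norm_num)
    (fun b => isDensityOp_outer (hφnorm b)) (fun b => isDensityOp_outer (hχnorm b)) fun x y => ?_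
  have hsplit := graphState_eq_diagProd_mul_of_cut_vertex H (· ∈ A) hc hcut
  simp only [outer, hsplit x, hsplit y, Fintype.sum_bool, hφ, hχ]
  rcases Bool.eq_false_or_eq_true (x c) with hx | hx <;>
    rcases Bool.eq_false_or_eq_true (y c) with hy | hy <;>
    simp only [hx, hy, map_mul, Complex.conj_ofReal, Bool.true_and, Bool.false_and,
      Bool.false_eq_true, Bool.true_eq_false, reduceIte, map_zero, one_mul, zero_mul, mul_zero,
      zero_add, add_zero]
  all_goals
    ring_nf
    rw [sq, ofReal_sqrt_two_mul_self]
    push_cast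
    ring

end CutVertex

section Reachability

variable {V : Type*} {G : SimpleGraph V}

lemma not_reachable_inducedSub_ne_of_mem_support (hG : G.IsAcyclic) {a b v : V} {p : G.Walk a b}
    (hp : p.IsPath) (hv : v ∈ p.support) (ha : a ≠ v) (hb : b ≠ v) :
    ¬ (inducedSub G (· ≠ v)).Reachable ⟨a, ha⟩ ⟨b, hb⟩ := by
  rintro ⟨q⟩
  let q' : G.Walk a b := q.map (⟨Subtype.val, id⟩ : inducedSub G (· ≠ v) →g G)
  have hpq : (⟨p, hp⟩ : G.Path a b) = q'.toPath := (hG.subsingleton_path a b).elim _ _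
  have hv' : v ∈ q'.support := q'.support_toPath_subset_support (hpq ▸ hv)
  rw [SimpleGraph.Walk.support_map] at hv'
  obtain ⟨w, -, hw⟩ := List.mem_map.mp hv'
  exact w.2 hw

lemma eq_and_eq_of_adj_of_reachable_inducedSub_ne (hG : G.IsAcyclic) {u v a b : V}
    (hadj : G.Adj v u) (hab : G.Adj a b) (hb : b ≠ v)
    (hub : (inducedSub G (· ≠ v)).Reachable ⟨u, hadj.ne'⟩ ⟨b, hb⟩)
    (hua : ¬ ∃ h : a ≠ v, (inducedSub G (· ≠ v)).Reachable ⟨u, hadj.ne'⟩ ⟨a, h⟩) :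
    a = v ∧ b = u := by
  have hav : a = v := by
    by_contra hav
    exact hua ⟨hav, hub.trans
      (show (inducedSub G (· ≠ v)).Adj ⟨b, hb⟩ ⟨a, hav⟩ from hab.symm).reachable⟩
  subst hav
  refine ⟨rfl, ?_⟩
  by_contra hbu
  have hpath : (SimpleGraph.Walk.cons hab.symm (SimpleGraph.Walk.cons hadj .nil)).IsPath := by
    simp [hb, hbu, hadj.ne]
  exact not_reachable_inducedSub_ne_of_mem_support hG hpath (by simp) hb hadj.ne' hub.symm

end Reachability

open Classical in
theorem stmt12_general {V : Type*} [Fintype V] [DecidableEq V]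
    (G : SimpleGraph V) [DecidableRel G.Adj] (hT : G.IsTree)
    (R j v u : V) (hRv : R ≠ v)
    (p : G.Walk R j) (hp : p.IsPath) (hv : v ∈ p.support)
    (hadj : G.Adj v u)
    (T : Set V)
    (hT' : T = {w : V | ∃ hw : w ≠ v,
      (inducedSub G (· ≠ v)).Reachable ⟨u, hadj.ne'⟩ ⟨w, hw⟩})
    (hvT : v ∉ T) :
    ((¬ ∃ h : j ≠ v, (inducedSub G (· ≠ v)).Reachable ⟨R, hRv⟩ ⟨j, h⟩) ∧
        (¬ ∃ h : v ≠ v, (inducedSub G (· ≠ v)).Reachable ⟨R, hRv⟩ ⟨v, h⟩)) ∧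
      SeparableWrt
        {t : {w : V // w ∉ T} | ∃ h : t.1 ≠ v,
          (inducedSub G (· ≠ v)).Reachable ⟨R, hRv⟩ ⟨t.1, h⟩}
        (ptraceKeep (· ∉ T) (outer (graphState G) (graphState G))) := by
  refine ⟨⟨fun ⟨hjv, hRj⟩ =>
    not_reachable_inducedSub_ne_of_mem_support hT.isAcyclic hp hv hRv hjv hRj,
    fun ⟨h, _⟩ => h rfl⟩, ?_⟩
  have huT : ¬ u ∉ T := by
    rw [hT', not_not]
    exact ⟨hadj.ne', .refl _⟩
  have hcutT : ∀ a b, G.Adj a b → a ∉ T → ¬ b ∉ T → a = v ∧ b = u := by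
    intro a b hab ha hb
    rw [hT'] at ha hb
    obtain ⟨hbv, hub⟩ := not_not.mp hb
    exact eq_and_eq_of_adj_of_reachable_inducedSub_ne hT.isAcyclic hadj hab hbv hub ha
  rw [funext₂ (ptraceKeep_graphState_of_cut_edge G (· ∉ T) hvT huT hadj hcutT)]
  convert separableWrt_dephased_graphState_of_cut_vertex (inducedSub G (· ∉ T)) _
    (c := (⟨v, hvT⟩ : {w // w ∉ T})) ?_ ?_
  · rintro ⟨h, -⟩
    exact h rfl
  rintro a b hab ⟨hav, hRa⟩ hbA
  by_contra hbv
  have hbv' : b.1 ≠ v := fun h => hbv (Subtype.ext h)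
  exact hbA (Set.mem_ofPred.mpr ⟨hbv', hRa.trans
    (show (inducedSub G (· ≠ v)).Adj ⟨a, hav⟩ ⟨b, hbv'⟩ from hab).reachable⟩)

open Classical in
/-- Let `G` be a tree, `R ≠ j`, `v ∉ {R, j}` a vertex on the path `p`
from `R` to `j`, `u` a neighbor of `v` off the path, and `T` the vertex set of the
connected component of `u` in `G − v`.  Then the reduced state `Tr_T(|G⟩⟨G|)` is separable
with respect to the bipartition `(C_R, (V∖T)∖C_R)`, where `C_R` is the component of `R` in
`G − v`; moreover `j` and `v` belong to `(V∖T)∖C_R`. -/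
theorem stmt12 {V : Type*} [Fintype V] [DecidableEq V]
    (G : SimpleGraph V) [DecidableRel G.Adj] (hT : G.IsTree)
    (R j v u : V) (hRj : R ≠ j) (hRv : R ≠ v) (hjv : j ≠ v)
    (p : G.Walk R j) (hp : p.IsPath) (hv : v ∈ p.support)
    (hadj : G.Adj v u) (hup : u ∉ p.support)
    (T : Set V)
    (hT' : T = {w : V | ∃ hw : w ≠ v,
      (inducedSub G (· ≠ v)).Reachable ⟨u, hadj.ne'⟩ ⟨w, hw⟩})
    (hjT : j ∉ T) (hvT : v ∉ T) :
    ((¬ ∃ h : j ≠ v, (inducedSub G (· ≠ v)).Reachable ⟨R, hRv⟩ ⟨j, h⟩) ∧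
        (¬ ∃ h : v ≠ v, (inducedSub G (· ≠ v)).Reachable ⟨R, hRv⟩ ⟨v, h⟩)) ∧
      SeparableWrt
        {t : {w : V // w ∉ T} | ∃ h : t.1 ≠ v,
          (inducedSub G (· ≠ v)).Reachable ⟨R, hRv⟩ ⟨t.1, h⟩}
        (ptraceKeep (· ∉ T) (outer (graphState G) (graphState G))) :=
  stmt12_general G hT R j v u hRv p hp hv hadj T hT' hvT
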